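/- arXiv:1805.10112 — 2 statements merged into one kernel-verified Lean document; each statement's English description precedes it below -/
import Mathlib

section
/- Let E be a finite set, Γ a finite nonempty collection of subsets of E, and E = E₁ ⊔ E₂ a partition into two nonempty sets that divides Γ. Then MEO(Γ) = MEO(Γ₁) + MEO(Γ₂), where Γᵢ = {γ ∩ Eᵢ : γ ∈ Γ}. -/
/-!
Splitting every `γ ∈ Γ` into `(γ ∩ E₁, γ ∩ E₂)` splits each overlap `|γ ∩ γ'|` into the overlaps of
the two parts, so the expected overlap of any pmf on `Γ` is the sum of the expected overlaps of its
two marginals. Conversely, since the partition divides `Γ`, every pair of pmfs on `Γ₁` and `Γ₂` is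
the pair of marginals of their product, a pmf on `Γ`. Hence the set of attainable expected overlaps
for `Γ` is the Minkowski sum of those for `Γ₁` and `Γ₂`, and infima add.
-/

noncomputable section
open Finset

/-- A probability mass function on a finite family `Γ` of subsets of `E`:
nonnegative, supported on `Γ`, summing to one. -/
def IsPmf {E : Type*} [DecidableEq E] (Γ : Finset (Finset E)) (μ : Finset E → ℝ) : Prop :=
  (∀ γ, 0 ≤ μ γ) ∧ (∀ γ, γ ∉ Γ → μ γ = 0) ∧ ∑ γ ∈ Γ, μ γ = 1

/-- Expected overlap of two iid samples from `μ`. -/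
def EO {E : Type*} [DecidableEq E] (Γ : Finset (Finset E)) (μ : Finset E → ℝ) : ℝ :=
  ∑ γ ∈ Γ, ∑ γ' ∈ Γ, ((γ ∩ γ').card : ℝ) * μ γ * μ γ'

/-- Minimum expected overlap over all pmfs on `Γ`. -/
def MEO {E : Type*} [DecidableEq E] (Γ : Finset (Finset E)) : ℝ :=
  sInf {x : ℝ | ∃ μ, IsPmf Γ μ ∧ x = EO Γ μ}

section SerialRule

open scoped Pointwise

variable {E : Type*} [DecidableEq E]

def eoValues (Γ : Finset (Finset E)) : Set ℝ :=
  {x | ∃ μ, IsPmf Γ μ ∧ x = EO Γ μ}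

lemma MEO_eq_sInf_eoValues (Γ : Finset (Finset E)) : MEO Γ = sInf (eoValues Γ) := rfl

section Basic

variable {Γ : Finset (Finset E)} {μ ν : Finset E → ℝ}

lemma exists_isPmf (hΓ : Γ.Nonempty) : ∃ μ, IsPmf Γ μ := by
  obtain ⟨γ₀, hγ₀⟩ := hΓ
  refine ⟨Pi.single γ₀ 1, fun γ => ?_, fun γ hγ => ?_, ?_⟩
  · by_cases h : γ = γ₀ <;> simp [h]
  · exact Pi.single_eq_of_ne (ne_of_mem_of_not_mem hγ₀ hγ).symm _
  · simp [Finset.sum_pi_single', hγ₀]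

lemma EO_nonneg (hμ : IsPmf Γ μ) : 0 ≤ EO Γ μ :=
  sum_nonneg fun _ _ => sum_nonneg fun _ _ =>
    mul_nonneg (mul_nonneg (Nat.cast_nonneg _) (hμ.1 _)) (hμ.1 _)

lemma EO_congr (h : ∀ γ ∈ Γ, μ γ = ν γ) : EO Γ μ = EO Γ ν :=
  sum_congr rfl fun γ hγ => sum_congr rfl fun γ' hγ' => by rw [h γ hγ, h γ' hγ']

lemma eoValues_nonempty (hΓ : Γ.Nonempty) : (eoValues Γ).Nonempty :=
  let ⟨μ, hμ⟩ := exists_isPmf hΓ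
  ⟨EO Γ μ, μ, hμ, rfl⟩

lemma eoValues_bddBelow : BddBelow (eoValues Γ) :=
  ⟨0, by rintro _ ⟨μ, hμ, rfl⟩; exact EO_nonneg hμ⟩

end Basic

section Marginal

variable (Γ : Finset (Finset E)) (f : Finset E → Finset E) (μ : Finset E → ℝ)

def marginal (δ : Finset E) : ℝ :=
  ∑ γ ∈ Γ with f γ = δ, μ γ

variable {Γ μ}

lemma IsPmf.marginal (hμ : IsPmf Γ μ) : IsPmf (Γ.image f) (marginal Γ f μ) := by
  refine ⟨fun δ => sum_nonneg fun γ _ => hμ.1 γ, fun δ hδ => sum_eq_zero fun γ hγ => ?_, ?_⟩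
  · obtain ⟨hγΓ, rfl⟩ := mem_filter.1 hγ
    exact absurd (mem_image_of_mem f hγΓ) hδ
  · exact (sum_fiberwise_of_maps_to (fun γ hγ => mem_image_of_mem f hγ) μ).trans hμ.2.2

variable (Γ μ)

lemma sum_marginal_mul (g : Finset E → ℝ) :
    ∑ δ ∈ Γ.image f, marginal Γ f μ δ * g δ = ∑ γ ∈ Γ, μ γ * g (f γ) := by
  rw [← sum_fiberwise_of_maps_to (fun γ hγ => mem_image_of_mem f hγ) (fun γ => μ γ * g (f γ))]
  refine sum_congr rfl fun δ _ => ?_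
  rw [marginal, sum_mul]
  exact sum_congr rfl fun γ hγ => by rw [(mem_filter.1 hγ).2]

lemma EO_image_marginal :
    EO (Γ.image f) (marginal Γ f μ) =
      ∑ γ ∈ Γ, ∑ γ' ∈ Γ, ((f γ ∩ f γ').card : ℝ) * μ γ * μ γ' := by
  calc EO (Γ.image f) (marginal Γ f μ)
      = ∑ δ ∈ Γ.image f, marginal Γ f μ δ *
          ∑ δ' ∈ Γ.image f, marginal Γ f μ δ' * ((δ ∩ δ').card : ℝ) := by
        simp only [EO, mul_sum]
        exact sum_congr rfl fun _ _ => sum_congr rfl fun _ _ => by ring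
    _ = ∑ γ ∈ Γ, μ γ * ∑ γ' ∈ Γ, μ γ' * ((f γ ∩ f γ').card : ℝ) := by
        simp only [sum_marginal_mul]
    _ = _ := by
        simp only [mul_sum]
        exact sum_congr rfl fun _ _ => sum_congr rfl fun _ _ => by ring

end Marginal

section Product

variable {Γ : Finset (Finset E)} {E₁ E₂ : Finset E}

def Divides (Γ : Finset (Finset E)) (E₁ E₂ : Finset E) : Prop :=
  Γ = image₂ (· ∪ ·) (Γ.image (· ∩ E₁)) (Γ.image (· ∩ E₂))

lemma Divides.symm (hdiv : Divides Γ E₁ E₂) : Divides Γ E₂ E₁ := by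
  unfold Divides at *
  rw [image₂_swap]
  convert hdiv using 2
  funext a b
  exact union_comm b a

def prodPmf (E₁ E₂ : Finset E) (μ₁ μ₂ : Finset E → ℝ) (γ : Finset E) : ℝ :=
  μ₁ (γ ∩ E₁) * μ₂ (γ ∩ E₂)

lemma prodPmf_comm (μ₁ μ₂ : Finset E → ℝ) : prodPmf E₁ E₂ μ₁ μ₂ = prodPmf E₂ E₁ μ₂ μ₁ :=
  funext fun _ => mul_comm _ _

end Product

section Partition

variable [Fintype E] {E₁ E₂ : Finset E}

lemma inter_union_inter_of_isCompl (h : IsCompl E₁ E₂) (s : Finset E) :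
    s ∩ E₁ ∪ s ∩ E₂ = s := by
  obtain rfl := h.compl_eq
  ext a; simp only [mem_union, mem_inter, mem_compl]; tauto

lemma union_inter_left_of_isCompl (h : IsCompl E₁ E₂) (s t : Finset E) :
    (s ∩ E₁ ∪ t ∩ E₂) ∩ E₁ = s ∩ E₁ := by
  obtain rfl := h.compl_eq
  ext a; simp only [mem_union, mem_inter, mem_compl]; tauto

lemma union_inter_right_of_isCompl (h : IsCompl E₁ E₂) (s t : Finset E) :
    (s ∩ E₁ ∪ t ∩ E₂) ∩ E₂ = t ∩ E₂ := by
  rw [union_comm, union_inter_left_of_isCompl h.symm]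

lemma card_inter_eq_add_of_isCompl (h : IsCompl E₁ E₂) (s t : Finset E) :
    (s ∩ t).card = (s ∩ E₁ ∩ (t ∩ E₁)).card + (s ∩ E₂ ∩ (t ∩ E₂)).card := by
  rw [← card_union_of_disjoint]
  · congr 1
    rw [inter_inter_inter_comm, inter_self, inter_inter_inter_comm, inter_self,
      inter_union_inter_of_isCompl h]
  · exact (h.disjoint.mono inter_subset_right inter_subset_right).mono
      inter_subset_right inter_subset_right

lemma EO_eq_add_EO_marginal (h : IsCompl E₁ E₂) (Γ : Finset (Finset E)) (μ : Finset E → ℝ) :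
    EO Γ μ = EO (Γ.image (· ∩ E₁)) (marginal Γ (· ∩ E₁) μ) +
      EO (Γ.image (· ∩ E₂)) (marginal Γ (· ∩ E₂) μ) := by
  simp only [EO_image_marginal, ← sum_add_distrib]
  refine sum_congr rfl fun γ _ => sum_congr rfl fun γ' _ => ?_
  rw [card_inter_eq_add_of_isCompl h]
  push_cast
  ring

variable {Γ : Finset (Finset E)}

lemma Divides.mem (h : IsCompl E₁ E₂) (hdiv : Divides Γ E₁ E₂) {γ : Finset E}
    (h₁ : γ ∩ E₁ ∈ Γ.image (· ∩ E₁)) (h₂ : γ ∩ E₂ ∈ Γ.image (· ∩ E₂)) : γ ∈ Γ := by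
  rw [hdiv, ← inter_union_inter_of_isCompl h γ]
  exact mem_image₂_of_mem h₁ h₂

lemma Divides.sum_fiber (h : IsCompl E₁ E₂) (hdiv : Divides Γ E₁ E₂) {δ : Finset E}
    (hδ : δ ∈ Γ.image (· ∩ E₁)) (g : Finset E → ℝ) :
    ∑ γ ∈ Γ with γ ∩ E₁ = δ, g (γ ∩ E₂) = ∑ δ₂ ∈ Γ.image (· ∩ E₂), g δ₂ := by
  obtain ⟨γ₀, -, rfl⟩ := mem_image.1 hδ
  refine sum_nbij' (· ∩ E₂) (γ₀ ∩ E₁ ∪ ·) (fun γ hγ => mem_image_of_mem _ (mem_filter.1 hγ).1)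
    (fun δ₂ hδ₂ => ?_) (fun γ hγ => ?_) (fun δ₂ hδ₂ => ?_) (fun _ _ => rfl)
  · obtain ⟨γ₁, -, rfl⟩ := mem_image.1 hδ₂
    refine mem_filter.2 ⟨?_, union_inter_left_of_isCompl h _ _⟩
    rw [hdiv]
    exact mem_image₂_of_mem hδ hδ₂
  · rw [← (mem_filter.1 hγ).2, inter_union_inter_of_isCompl h]
  · obtain ⟨γ₁, -, rfl⟩ := mem_image.1 hδ₂
    exact union_inter_right_of_isCompl h _ _

variable {μ₁ μ₂ : Finset E → ℝ}

lemma marginal_prodPmf_left (h : IsCompl E₁ E₂) (hdiv : Divides Γ E₁ E₂)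
    (hμ₂ : ∑ δ ∈ Γ.image (· ∩ E₂), μ₂ δ = 1) {δ : Finset E} (hδ : δ ∈ Γ.image (· ∩ E₁)) :
    marginal Γ (· ∩ E₁) (prodPmf E₁ E₂ μ₁ μ₂) δ = μ₁ δ := by
  calc marginal Γ (· ∩ E₁) (prodPmf E₁ E₂ μ₁ μ₂) δ
      = ∑ γ ∈ Γ with γ ∩ E₁ = δ, μ₁ δ * μ₂ (γ ∩ E₂) :=
        sum_congr rfl fun γ hγ => by rw [prodPmf, (mem_filter.1 hγ).2]
    _ = μ₁ δ := by rw [← mul_sum, hdiv.sum_fiber h hδ, hμ₂, mul_one]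

lemma marginal_prodPmf_right (h : IsCompl E₁ E₂) (hdiv : Divides Γ E₁ E₂)
    (hμ₁ : ∑ δ ∈ Γ.image (· ∩ E₁), μ₁ δ = 1) {δ : Finset E} (hδ : δ ∈ Γ.image (· ∩ E₂)) :
    marginal Γ (· ∩ E₂) (prodPmf E₁ E₂ μ₁ μ₂) δ = μ₂ δ := by
  rw [prodPmf_comm]
  exact marginal_prodPmf_left h.symm hdiv.symm hμ₁ hδ

lemma IsPmf.prodPmf (h : IsCompl E₁ E₂) (hdiv : Divides Γ E₁ E₂)
    (hμ₁ : IsPmf (Γ.image (· ∩ E₁)) μ₁) (hμ₂ : IsPmf (Γ.image (· ∩ E₂)) μ₂) :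
    IsPmf Γ (prodPmf E₁ E₂ μ₁ μ₂) := by
  refine ⟨fun γ => mul_nonneg (hμ₁.1 _) (hμ₂.1 _), fun γ hγ => ?_, ?_⟩
  · by_contra hne
    obtain ⟨hne₁, hne₂⟩ := mul_ne_zero_iff.1 hne
    exact hγ (hdiv.mem h (not_imp_comm.1 (hμ₁.2.1 _) hne₁) (not_imp_comm.1 (hμ₂.2.1 _) hne₂))
  · rw [← sum_fiberwise_of_maps_to (fun γ hγ => mem_image_of_mem (· ∩ E₁) hγ), ← hμ₁.2.2]
    exact sum_congr rfl fun δ hδ => marginal_prodPmf_left h hdiv hμ₂.2.2 hδ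

lemma EO_prodPmf (h : IsCompl E₁ E₂) (hdiv : Divides Γ E₁ E₂)
    (hμ₁ : ∑ δ ∈ Γ.image (· ∩ E₁), μ₁ δ = 1) (hμ₂ : ∑ δ ∈ Γ.image (· ∩ E₂), μ₂ δ = 1) :
    EO Γ (prodPmf E₁ E₂ μ₁ μ₂) = EO (Γ.image (· ∩ E₁)) μ₁ + EO (Γ.image (· ∩ E₂)) μ₂ := by
  rw [EO_eq_add_EO_marginal h, EO_congr fun _ => marginal_prodPmf_left h hdiv hμ₂,
    EO_congr fun _ => marginal_prodPmf_right h hdiv hμ₁]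

lemma eoValues_eq_add (h : IsCompl E₁ E₂) (hdiv : Divides Γ E₁ E₂) :
    eoValues Γ = eoValues (Γ.image (· ∩ E₁)) + eoValues (Γ.image (· ∩ E₂)) := by
  ext x
  constructor
  · rintro ⟨μ, hμ, rfl⟩
    exact ⟨_, ⟨_, hμ.marginal _, rfl⟩, _, ⟨_, hμ.marginal _, rfl⟩,
      (EO_eq_add_EO_marginal h Γ μ).symm⟩
  · rintro ⟨_, ⟨μ₁, hμ₁, rfl⟩, _, ⟨μ₂, hμ₂, rfl⟩, rfl⟩
    exact ⟨_, hμ₁.prodPmf h hdiv hμ₂, (EO_prodPmf h hdiv hμ₁.2.2 hμ₂.2.2).symm⟩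

end Partition

end SerialRule

theorem meo_serial_rule_general {E : Type*} [Fintype E] [DecidableEq E]
    (Γ : Finset (Finset E)) (hΓ : Γ.Nonempty)
    (E₁ E₂ : Finset E)
    (hdisj : Disjoint E₁ E₂) (hcover : E₁ ∪ E₂ = Finset.univ)
    (hdiv : Γ = Finset.image₂ (· ∪ ·) (Γ.image (· ∩ E₁)) (Γ.image (· ∩ E₂))) :
    MEO Γ = MEO (Γ.image (· ∩ E₁)) + MEO (Γ.image (· ∩ E₂)) := by
  have h : IsCompl E₁ E₂ := ⟨hdisj, codisjoint_iff.2 hcover⟩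
  simp only [MEO_eq_sInf_eoValues]
  rw [eoValues_eq_add h hdiv]
  exact csInf_add (eoValues_nonempty (hΓ.image _)) eoValues_bddBelow
    (eoValues_nonempty (hΓ.image _)) eoValues_bddBelow

/-- the serial rule for MEO when a partition `E = E₁ ⊔ E₂` divides `Γ`. -/
theorem meo_serial_rule {E : Type*} [Fintype E] [DecidableEq E]
    (Γ : Finset (Finset E)) (hΓ : Γ.Nonempty)
    (E₁ E₂ : Finset E) (hE₁ : E₁.Nonempty) (hE₂ : E₂.Nonempty)
    (hdisj : Disjoint E₁ E₂) (hcover : E₁ ∪ E₂ = Finset.univ)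
    (hdiv : Γ = Finset.image₂ (· ∪ ·) (Γ.image (· ∩ E₁)) (Γ.image (· ∩ E₂))) :
    MEO Γ = MEO (Γ.image (· ∩ E₁)) + MEO (Γ.image (· ∩ E₂)) :=
  meo_serial_rule_general Γ hΓ E₁ E₂ hdisj hcover hdiv
end
end

section
/- Let E be a finite set, Γ a finite nonempty collection of subsets of E, and E = E₁ ⊔ E₂ a partition into two nonempty sets such that every γ ∈ Γ meets both E₁ and E₂. Then Mod₂(Γ)⁻¹ ≥ Mod₂(Γ₁)⁻¹ + Mod₂(Γ₂)⁻¹, where Γᵢ = {γ ∩ Eᵢ : γ ∈ Γ}; moreover equality holds if the partition divides Γ. -/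
/-!
Gluing `a • ρ₁` on `E₁` and `b • ρ₂` on `E₂ = E₁ᶜ`, with `ρᵢ` admissible for `Γᵢ` and
`a + b = 1`, gives a density admissible for `Γ`, since every `γ ∈ Γ` splits into traces
`γ ∩ Eᵢ ∈ Γᵢ`. Its energy is at most `a² Mod₂(Γ₁) + b² Mod₂(Γ₂)`, and optimizing over `a`
gives `Mod₂(Γ) ≤ (Mod₂(Γ₁)⁻¹ + Mod₂(Γ₂)⁻¹)⁻¹`.

Conversely, when `Γ` contains every union `γ₁ ∪ γ₂` with `γᵢ ∈ Γᵢ`, take an admissible `ρ`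
for `Γ` and let `tᵢ` be the least `ρ`-length of a member of `Γᵢ`. A union of two minimizers
shows `t₁ + t₂ ≥ 1`, and `ρ / tᵢ` restricted to `Eᵢ` is admissible for `Γᵢ`, so the energy of
`ρ` on `Eᵢ` is at least `Mod₂(Γᵢ) tᵢ²`. Cauchy–Schwarz bounds `Mod₂(Γ₁) t₁² + Mod₂(Γ₂) t₂²`
below by `(Mod₂(Γ₁)⁻¹ + Mod₂(Γ₂)⁻¹)⁻¹`.
-/

noncomputable section
open Finset

/-- A density `ρ` is admissible for the family `Γ`: nonnegative, and every
member of `Γ` has total `ρ`-cost at least one. -/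
def Adm {E : Type*} [DecidableEq E] (Γ : Finset (Finset E)) (ρ : E → ℝ) : Prop :=
  (∀ e, 0 ≤ ρ e) ∧ ∀ γ ∈ Γ, 1 ≤ ∑ e ∈ γ, ρ e

/-- The 2-modulus of `Γ`: the infimum of the energy `∑_{e∈E} ρ(e)²` over
admissible densities. -/
def Mod2 {E : Type*} [Fintype E] [DecidableEq E] (Γ : Finset (Finset E)) : ℝ :=
  sInf {x : ℝ | ∃ ρ, Adm Γ ρ ∧ x = ∑ e : E, (ρ e) ^ 2}

lemma adm_one {E : Type*} [DecidableEq E] {Γ : Finset (Finset E)}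
    (hΓ : ∀ γ ∈ Γ, γ.Nonempty) : Adm Γ 1 :=
  ⟨fun _ => zero_le_one, fun γ hγ => by simpa using (hΓ γ hγ).card_pos⟩

section

variable {E : Type*} [Fintype E] [DecidableEq E]

lemma mod2_le_sum_sq {Γ : Finset (Finset E)} {ρ : E → ℝ} (hρ : Adm Γ ρ) :
    Mod2 Γ ≤ ∑ e, ρ e ^ 2 :=
  csInf_le ⟨0, by rintro _ ⟨ρ, -, rfl⟩; positivity⟩ ⟨ρ, hρ, rfl⟩

lemma le_mod2 {Γ : Finset (Finset E)} (hΓ : ∀ γ ∈ Γ, γ.Nonempty) {c : ℝ}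
    (h : ∀ ρ, Adm Γ ρ → c ≤ ∑ e, ρ e ^ 2) : c ≤ Mod2 Γ :=
  le_csInf ⟨_, 1, adm_one hΓ, rfl⟩ <| by rintro _ ⟨ρ, hρ, rfl⟩; exact h ρ hρ

lemma exists_adm_sum_sq_lt {Γ : Finset (Finset E)} (hΓ : ∀ γ ∈ Γ, γ.Nonempty) {ε : ℝ}
    (hε : 0 < ε) : ∃ ρ, Adm Γ ρ ∧ ∑ e, ρ e ^ 2 < Mod2 Γ + ε := by
  obtain ⟨_, ⟨ρ, hρ, rfl⟩, hlt⟩ :=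
    Real.lt_sInf_add_pos (s := {x | ∃ ρ, Adm Γ ρ ∧ x = ∑ e, ρ e ^ 2}) ⟨_, 1, adm_one hΓ, rfl⟩ hε
  exact ⟨ρ, hρ, hlt⟩

lemma inv_card_le_mod2 {Γ : Finset (Finset E)} (hΓ : ∀ γ ∈ Γ, γ.Nonempty) {γ : Finset E}
    (hγ : γ ∈ Γ) : (#γ : ℝ)⁻¹ ≤ Mod2 Γ := by
  refine le_mod2 hΓ fun ρ ⟨hρ₀, hρ⟩ => ?_
  have hcard : (0 : ℝ) < #γ := by exact_mod_cast (hΓ γ hγ).card_pos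
  rw [inv_le_iff_one_le_mul₀' hcard]
  calc (1 : ℝ) ≤ (∑ e ∈ γ, ρ e) ^ 2 := one_le_pow₀ (hρ γ hγ)
    _ ≤ #γ * ∑ e ∈ γ, ρ e ^ 2 := sq_sum_le_card_mul_sum_sq
    _ ≤ #γ * ∑ e, ρ e ^ 2 := by
      gcongr
      exact subset_univ γ

lemma mod2_pos {Γ : Finset (Finset E)} (hΓ : Γ.Nonempty) (hne : ∀ γ ∈ Γ, γ.Nonempty) :
    0 < Mod2 Γ := by
  obtain ⟨γ, hγ⟩ := hΓ
  have hcard : (0 : ℝ) < #γ := by exact_mod_cast (hne γ hγ).card_pos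
  exact (inv_pos.2 hcard).trans_le (inv_card_le_mod2 hne hγ)

lemma sum_sq_piecewise (S : Finset E) (f g : E → ℝ) :
    ∑ e, S.piecewise f g e ^ 2 = ∑ e ∈ S, f e ^ 2 + ∑ e ∈ Sᶜ, g e ^ 2 := by
  have : ∀ e, S.piecewise f g e ^ 2 = S.piecewise (f ^ 2) (g ^ 2) e := fun e => by
    by_cases he : e ∈ S <;> simp [he]
  simp only [this, sum_piecewise, univ_inter, compl_eq_univ_sdiff]; rfl

lemma adm_piecewise_smul {Γ Γ₁ Γ₂ : Finset (Finset E)} {S : Finset E}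
    (h₁ : ∀ γ ∈ Γ, γ ∩ S ∈ Γ₁) (h₂ : ∀ γ ∈ Γ, γ ∩ Sᶜ ∈ Γ₂) {ρ₁ ρ₂ : E → ℝ}
    (hρ₁ : Adm Γ₁ ρ₁) (hρ₂ : Adm Γ₂ ρ₂) {a b : ℝ} (ha : 0 ≤ a) (hb : 0 ≤ b)
    (hab : 1 ≤ a + b) : Adm Γ (S.piecewise (a • ρ₁) (b • ρ₂)) := by
  refine ⟨S.le_piecewise_of_le_of_le (fun e => mul_nonneg ha (hρ₁.1 e))
    (fun e => mul_nonneg hb (hρ₂.1 e)), fun γ hγ => ?_⟩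
  rw [sum_piecewise, sdiff_eq_inter_compl]
  simp only [Pi.smul_apply, smul_eq_mul, ← mul_sum]
  calc (1 : ℝ) ≤ a * 1 + b * 1 := by simpa using hab
    _ ≤ a * ∑ e ∈ γ ∩ S, ρ₁ e + b * ∑ e ∈ γ ∩ Sᶜ, ρ₂ e := by
      gcongr
      exacts [hρ₁.2 _ (h₁ γ hγ), hρ₂.2 _ (h₂ γ hγ)]

lemma mod2_le_sq_mul_add_sq_mul {Γ Γ₁ Γ₂ : Finset (Finset E)} {S : Finset E}
    (h₁ : ∀ γ ∈ Γ, γ ∩ S ∈ Γ₁) (h₂ : ∀ γ ∈ Γ, γ ∩ Sᶜ ∈ Γ₂)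
    (hne₁ : ∀ γ ∈ Γ₁, γ.Nonempty) (hne₂ : ∀ γ ∈ Γ₂, γ.Nonempty) {a b : ℝ}
    (ha : 0 ≤ a) (hb : 0 ≤ b) (hab : a + b = 1) :
    Mod2 Γ ≤ a ^ 2 * Mod2 Γ₁ + b ^ 2 * Mod2 Γ₂ := by
  refine le_of_forall_pos_le_add fun ε hε => ?_
  obtain ⟨ρ₁, hρ₁, hlt₁⟩ := exists_adm_sum_sq_lt hne₁ hε
  obtain ⟨ρ₂, hρ₂, hlt₂⟩ := exists_adm_sum_sq_lt hne₂ hε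
  have hsq : a ^ 2 + b ^ 2 ≤ 1 := by nlinarith
  calc Mod2 Γ ≤ ∑ e, S.piecewise (a • ρ₁) (b • ρ₂) e ^ 2 :=
        mod2_le_sum_sq (adm_piecewise_smul h₁ h₂ hρ₁ hρ₂ ha hb hab.ge)
    _ = a ^ 2 * ∑ e ∈ S, ρ₁ e ^ 2 + b ^ 2 * ∑ e ∈ Sᶜ, ρ₂ e ^ 2 := by
      simp only [sum_sq_piecewise, Pi.smul_apply, smul_eq_mul, mul_pow, mul_sum]
    _ ≤ a ^ 2 * ∑ e, ρ₁ e ^ 2 + b ^ 2 * ∑ e, ρ₂ e ^ 2 := by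
      gcongr <;> exact subset_univ _
    _ ≤ a ^ 2 * (Mod2 Γ₁ + ε) + b ^ 2 * (Mod2 Γ₂ + ε) := by gcongr
    _ ≤ a ^ 2 * Mod2 Γ₁ + b ^ 2 * Mod2 Γ₂ + ε := by nlinarith

lemma mod2_le_inv_add_inv {Γ Γ₁ Γ₂ : Finset (Finset E)} {S : Finset E}
    (h₁ : ∀ γ ∈ Γ, γ ∩ S ∈ Γ₁) (h₂ : ∀ γ ∈ Γ, γ ∩ Sᶜ ∈ Γ₂)
    (hne₁ : ∀ γ ∈ Γ₁, γ.Nonempty) (hne₂ : ∀ γ ∈ Γ₂, γ.Nonempty)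
    (hM₁ : 0 < Mod2 Γ₁) (hM₂ : 0 < Mod2 Γ₂) :
    Mod2 Γ ≤ ((Mod2 Γ₁)⁻¹ + (Mod2 Γ₂)⁻¹)⁻¹ := by
  set M₁ := Mod2 Γ₁
  set M₂ := Mod2 Γ₂
  have hsum : M₁ + M₂ ≠ 0 := by positivity
  -- the weights minimizing `a² M₁ + b² M₂` subject to `a + b = 1`
  calc Mod2 Γ ≤ (M₂ / (M₁ + M₂)) ^ 2 * M₁ + (M₁ / (M₁ + M₂)) ^ 2 * M₂ :=
        mod2_le_sq_mul_add_sq_mul h₁ h₂ hne₁ hne₂ (by positivity) (by positivity)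
          (by field_simp; ring)
    _ = (M₁⁻¹ + M₂⁻¹)⁻¹ := by field_simp; ring

lemma mod2_mul_sq_le_sum_sq {Γ : Finset (Finset E)} {S : Finset E} (hS : ∀ γ ∈ Γ, γ ⊆ S)
    {ρ : E → ℝ} (hρ : ∀ e, 0 ≤ ρ e) {t : ℝ} (ht : 0 ≤ t)
    (hlen : ∀ γ ∈ Γ, t ≤ ∑ e ∈ γ, ρ e) : Mod2 Γ * t ^ 2 ≤ ∑ e ∈ S, ρ e ^ 2 := by
  rcases ht.eq_or_lt with rfl | ht
  · simpa using sum_nonneg fun e _ => sq_nonneg (ρ e)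
  have hadm : Adm Γ (S.piecewise (t⁻¹ • ρ) 0) := by
    refine ⟨S.le_piecewise_of_le_of_le (fun e => mul_nonneg (inv_nonneg.2 ht.le) (hρ e))
      le_rfl, fun γ hγ => ?_⟩
    rw [sum_piecewise, inter_eq_left.2 (hS γ hγ), sdiff_eq_empty_iff_subset.2 (hS γ hγ)]
    simp only [Pi.smul_apply, smul_eq_mul, ← mul_sum, sum_empty, add_zero]
    exact (le_inv_mul_iff₀ ht).2 (by simpa using hlen γ hγ)
  rw [← le_div_iff₀ (by positivity)]
  calc Mod2 Γ ≤ ∑ e, S.piecewise (t⁻¹ • ρ) 0 e ^ 2 := mod2_le_sum_sq hadm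
    _ = (∑ e ∈ S, ρ e ^ 2) / t ^ 2 := by
      simp [sum_sq_piecewise, mul_pow, ← mul_sum, div_eq_inv_mul]

-- Cauchy–Schwarz: `(M₁ + M₂)(M₁ t₁² + M₂ t₂²) - M₁ M₂ (t₁ + t₂)² = (M₁ t₁ - M₂ t₂)²`.
lemma inv_add_inv_inv_le_mul_sq_add_mul_sq {M₁ M₂ t₁ t₂ : ℝ} (hM₁ : 0 < M₁) (hM₂ : 0 < M₂)
    (ht : 1 ≤ t₁ + t₂) : (M₁⁻¹ + M₂⁻¹)⁻¹ ≤ M₁ * t₁ ^ 2 + M₂ * t₂ ^ 2 := by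
  rw [inv_add_inv hM₁.ne' hM₂.ne', inv_div, div_le_iff₀ (by positivity)]
  have h1 : M₂ * M₁ ≤ M₂ * M₁ * (t₁ + t₂) ^ 2 :=
    le_mul_of_one_le_right (by positivity) (one_le_pow₀ ht)
  nlinarith [sq_nonneg (M₁ * t₁ - M₂ * t₂)]

lemma inv_add_inv_inv_le_mod2 {Γ Γ₁ Γ₂ : Finset (Finset E)} {S : Finset E}
    (hsub₁ : ∀ γ ∈ Γ₁, γ ⊆ S) (hsub₂ : ∀ γ ∈ Γ₂, γ ⊆ Sᶜ)
    (hunion : ∀ γ₁ ∈ Γ₁, ∀ γ₂ ∈ Γ₂, γ₁ ∪ γ₂ ∈ Γ) (hne : ∀ γ ∈ Γ, γ.Nonempty)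
    (hΓ₁ : Γ₁.Nonempty) (hΓ₂ : Γ₂.Nonempty) (hM₁ : 0 < Mod2 Γ₁) (hM₂ : 0 < Mod2 Γ₂) :
    ((Mod2 Γ₁)⁻¹ + (Mod2 Γ₂)⁻¹)⁻¹ ≤ Mod2 Γ := by
  refine le_mod2 hne fun ρ hρ => ?_
  obtain ⟨γ₁, hγ₁, hmin₁⟩ := exists_min_image Γ₁ (fun γ => ∑ e ∈ γ, ρ e) hΓ₁
  obtain ⟨γ₂, hγ₂, hmin₂⟩ := exists_min_image Γ₂ (fun γ => ∑ e ∈ γ, ρ e) hΓ₂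
  have hlen : 1 ≤ ∑ e ∈ γ₁, ρ e + ∑ e ∈ γ₂, ρ e := by
    rw [← sum_union (disjoint_compl_right.mono (hsub₁ γ₁ hγ₁) (hsub₂ γ₂ hγ₂))]
    exact hρ.2 _ (hunion γ₁ hγ₁ γ₂ hγ₂)
  have hlen_nonneg : ∀ γ : Finset E, 0 ≤ ∑ e ∈ γ, ρ e := fun γ => sum_nonneg fun e _ => hρ.1 e
  calc _ ≤ Mod2 Γ₁ * (∑ e ∈ γ₁, ρ e) ^ 2 + Mod2 Γ₂ * (∑ e ∈ γ₂, ρ e) ^ 2 :=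
        inv_add_inv_inv_le_mul_sq_add_mul_sq hM₁ hM₂ hlen
    _ ≤ ∑ e ∈ S, ρ e ^ 2 + ∑ e ∈ Sᶜ, ρ e ^ 2 :=
        add_le_add (mod2_mul_sq_le_sum_sq hsub₁ hρ.1 (hlen_nonneg γ₁) hmin₁)
          (mod2_mul_sq_le_sum_sq hsub₂ hρ.1 (hlen_nonneg γ₂) hmin₂)
    _ = ∑ e, ρ e ^ 2 := sum_add_sum_compl S _

end

theorem mod2_serial_bound_general {E : Type*} [Fintype E] [DecidableEq E]
    (Γ : Finset (Finset E)) (hΓ : Γ.Nonempty)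
    (E₁ E₂ : Finset E)
    (hdisj : Disjoint E₁ E₂) (hcover : E₁ ∪ E₂ = Finset.univ)
    (hmeets : ∀ γ ∈ Γ, (γ ∩ E₁).Nonempty ∧ (γ ∩ E₂).Nonempty) :
    (Mod2 (Γ.image (· ∩ E₁)))⁻¹ + (Mod2 (Γ.image (· ∩ E₂)))⁻¹ ≤ (Mod2 Γ)⁻¹ ∧
    (Γ = Finset.image₂ (· ∪ ·) (Γ.image (· ∩ E₁)) (Γ.image (· ∩ E₂)) →
      (Mod2 Γ)⁻¹ = (Mod2 (Γ.image (· ∩ E₁)))⁻¹ + (Mod2 (Γ.image (· ∩ E₂)))⁻¹) := by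
  obtain rfl : E₂ = E₁ᶜ := (IsCompl.compl_eq ⟨hdisj, codisjoint_iff.2 hcover⟩).symm
  have hne : ∀ γ ∈ Γ, γ.Nonempty := fun γ hγ => (hmeets γ hγ).1.mono inter_subset_left
  have hne₁ : ∀ γ ∈ Γ.image (· ∩ E₁), γ.Nonempty :=
    forall_mem_image.2 fun γ hγ => (hmeets γ hγ).1
  have hne₂ : ∀ γ ∈ Γ.image (· ∩ E₁ᶜ), γ.Nonempty :=
    forall_mem_image.2 fun γ hγ => (hmeets γ hγ).2
  have hM₁ := mod2_pos (hΓ.image _) hne₁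
  have hM₂ := mod2_pos (hΓ.image _) hne₂
  have hupper := mod2_le_inv_add_inv (fun γ hγ => mem_image_of_mem (· ∩ E₁) hγ)
    (fun γ hγ => mem_image_of_mem (· ∩ E₁ᶜ) hγ) hne₁ hne₂ hM₁ hM₂
  have hserial := (le_inv_comm₀ (by positivity) (mod2_pos hΓ hne)).2 hupper
  refine ⟨hserial, fun hdiv => le_antisymm ?_ hserial⟩
  have hlower := inv_add_inv_inv_le_mod2 (forall_mem_image.2 fun _ _ => inter_subset_right)
    (forall_mem_image.2 fun _ _ => inter_subset_right)
    (fun γ₁ h₁ γ₂ h₂ => by rw [hdiv]; exact mem_image₂_of_mem h₁ h₂) hne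
    (hΓ.image _) (hΓ.image _) hM₁ hM₂
  exact (inv_le_comm₀ (by positivity) (mod2_pos hΓ hne)).1 hlower

/-- `Mod₂(Γ)⁻¹ ≥ Mod₂(Γ₁)⁻¹ + Mod₂(Γ₂)⁻¹` whenever every `γ ∈ Γ`
meets both parts of the partition, with equality if the partition divides `Γ`. -/
theorem mod2_serial_bound {E : Type*} [Fintype E] [DecidableEq E]
    (Γ : Finset (Finset E)) (hΓ : Γ.Nonempty)
    (E₁ E₂ : Finset E) (hE₁ : E₁.Nonempty) (hE₂ : E₂.Nonempty)
    (hdisj : Disjoint E₁ E₂) (hcover : E₁ ∪ E₂ = Finset.univ)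
    (hmeets : ∀ γ ∈ Γ, (γ ∩ E₁).Nonempty ∧ (γ ∩ E₂).Nonempty) :
    (Mod2 (Γ.image (· ∩ E₁)))⁻¹ + (Mod2 (Γ.image (· ∩ E₂)))⁻¹ ≤ (Mod2 Γ)⁻¹ ∧
    (Γ = Finset.image₂ (· ∪ ·) (Γ.image (· ∩ E₁)) (Γ.image (· ∩ E₂)) →
      (Mod2 Γ)⁻¹ = (Mod2 (Γ.image (· ∩ E₁)))⁻¹ + (Mod2 (Γ.image (· ∩ E₂)))⁻¹) :=
  mod2_serial_bound_general Γ hΓ E₁ E₂ hdisj hcover hmeets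
end
end
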